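/- arXiv:math/0010013 — 2 statements merged into one kernel-verified Lean document; each statement's English description precedes it below -/
import Mathlib

section
/- Let μ be a positive Radon measure on ℝⁿ which is 1-periodic, i.e. μ(B+e_i)=μ(B) for every Borel set B ⊂ ℝⁿ and every standard basis vector e_i, and normalized so that μ([0,1)ⁿ)=1. For ε>0 define the measure μ_ε by μ_ε(B) = εⁿ μ(ε⁻¹B) for all Borel B. Then μ_ε converges locally weakly* to the Lebesgue measure as ε→0: for every continuous function f:ℝⁿ→ℝ with compact support, ∫_{ℝⁿ} f dμ_ε → ∫_{ℝⁿ} f(x) dx as ε→0. -/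
/-!
Integer translates `γ + [0,1)ⁿ` of the unit cube tile `ℝⁿ`, and `∫ f dμ_ε = εⁿ ∫ f(εx) dμ(x)`.
For a `ℤⁿ`-periodic measure giving the cube mass one, the integral of `x ↦ f(εx)` over the
translate by `γ` differs from `f(εγ)` by at most the oscillation of `f` at scale `εn`, and only
`O(ε⁻ⁿ)` translates meet the support. Hence `∫ f dμ_ε` is within `O(1) · osc_{εn} f` of the
Riemann sum `εⁿ ∑_γ f(εγ)`. Lebesgue measure is such a measure and is fixed by the rescaling, so
both integrals approach the same Riemann sum.
-/

open MeasureTheory Filter Topology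

/-- The rescaled measure `μ_ε (B) = ε^n μ(ε⁻¹ B)`. -/
noncomputable def rescaledMeasure (n : ℕ) (μ : Measure (EuclideanSpace ℝ (Fin n))) (ε : ℝ) :
    Measure (EuclideanSpace ℝ (Fin n)) :=
  (ENNReal.ofReal ε) ^ n • Measure.map (fun x => ε • x) μ

open Finset

theorem MeasureTheory.Measure.map_add_left_eq_self_of_mem_closure {G : Type*} [AddGroup G]
    [MeasurableSpace G] [MeasurableAdd G] {μ : Measure G} {s : Set G}
    (hs : ∀ v ∈ s, μ.map (v + ·) = μ) {γ : G} (hγ : γ ∈ AddSubgroup.closure s) :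
    μ.map (γ + ·) = μ := by
  induction hγ using AddSubgroup.closure_induction with
  | mem v hv => exact hs v hv
  | zero => simp
  | add v w _ _ hv hw =>
    rw [show (v + w + ·) = (v + ·) ∘ (w + ·) from funext fun x => add_assoc v w x,
      ← Measure.map_map (measurable_const_add v) (measurable_const_add w), hw, hv]
  | neg v _ hv =>
    conv_lhs => rw [← hv]
    rw [Measure.map_map (measurable_const_add _) (measurable_const_add v)]
    simp [Function.comp_def]

theorem MeasureTheory.Measure.map_add_left_eq_self_of_image_add_right {G : Type*} [AddCommGroup G]
    [MeasurableSpace G] [MeasurableAdd G] {μ : Measure G} {v : G}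
    (h : ∀ B : Set G, MeasurableSet B → μ ((· + v) '' B) = μ B) : μ.map (v + ·) = μ := by
  ext B hB
  rw [Measure.map_apply (measurable_const_add v) hB,
    ← h _ (hB.preimage (measurable_const_add v))]
  simp_rw [add_comm _ v]
  rw [Set.image_preimage_eq _ (add_left_surjective v)]

theorem MeasureTheory.IsAddFundamentalDomain.abs_integral_sub_sum_le {G α : Type*} [AddGroup G]
    [Countable G] [AddAction G α] [MeasurableSpace α] [MeasurableConstVAdd G α] {D : Set α}
    {ν : Measure α} [VAddInvariantMeasure G α ν] (hD : IsAddFundamentalDomain G D ν) (hνD : ν D = 1)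
    {g : α → ℝ} (hg : Integrable g ν) (T : Finset G) (a : G → ℝ) {δ : ℝ}
    (hT : ∀ γ ∉ T, ∀ x ∈ D, g (γ +ᵥ x) = 0) (hosc : ∀ γ ∈ T, ∀ x ∈ D, |g (γ +ᵥ x) - a γ| ≤ δ) :
    |∫ x, g x ∂ν - ∑ γ ∈ T, a γ| ≤ #T * δ := by
  have hDfin : ν D ≠ ⊤ := by simp [hνD]
  have hint (γ : G) : IntegrableOn (fun x => g (γ +ᵥ x)) D ν :=
    ((measurePreserving_vadd γ ν).integrable_comp_of_integrable hg).integrableOn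
  have hcell (γ : G) : ∫ _ in D, a γ ∂ν = a γ := by simp [measureReal_def, hνD]
  have hsupp (γ : G) (hγ : γ ∉ T) : ∫ x in D, g (γ +ᵥ x) ∂ν = 0 :=
    setIntegral_eq_zero_of_forall_eq_zero fun x hx => hT γ hγ x hx
  calc |∫ x, g x ∂ν - ∑ γ ∈ T, a γ|
      = |∑ γ ∈ T, ∫ x in D, (g (γ +ᵥ x) - a γ) ∂ν| := by
        rw [hD.integral_eq_tsum'' g hg, tsum_eq_sum hsupp, ← sum_sub_distrib]
        congr 2 with γ
        rw [integral_sub (hint γ) (integrableOn_const hDfin), hcell]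
    _ ≤ ∑ γ ∈ T, |∫ x in D, (g (γ +ᵥ x) - a γ) ∂ν| := abs_sum_le_sum_abs _ _
    _ ≤ ∑ _γ ∈ T, δ := sum_le_sum fun γ hγ => by
        simpa [measureReal_def, hνD] using norm_setIntegral_le_of_norm_le_const hDfin.lt_top
          fun x hx => (Real.norm_eq_abs _).trans_le (hosc γ hγ x hx)
    _ = #T * δ := by rw [sum_const, nsmul_eq_mul]

theorem HasCompactSupport.exists_nonneg_forall_lt_norm_eq_zero {E β : Type*}
    [SeminormedAddCommGroup E] [Zero β] {f : E → β} (hf : HasCompactSupport f) :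
    ∃ R, 0 ≤ R ∧ ∀ x, R < ‖x‖ → f x = 0 := by
  obtain ⟨R, hR⟩ := hf.isBounded.subset_closedBall 0
  refine ⟨max R 0, le_max_right R 0, fun x hx => image_eq_zero_of_notMem_tsupport fun hx' => ?_⟩
  have := mem_closedBall_zero_iff.mp (hR hx')
  linarith [le_max_left R 0]

theorem tendsto_of_forall_eventually_abs_sub_le {α : Type*} {l : Filter α} {F : α → ℝ} {a C : ℝ}
    (h : ∀ δ > 0, ∀ᶠ x in l, |F x - a| ≤ C * δ) : Tendsto F l (𝓝 a) := by
  refine Metric.tendsto_nhds.mpr fun η hη => ?_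
  filter_upwards [h (η / (|C| + 1)) (by positivity)] with x hx
  rw [Real.dist_eq]
  calc |F x - a| ≤ |C| * (η / (|C| + 1)) := hx.trans (by gcongr; exact le_abs_self C)
    _ < η := by
      rw [mul_div_assoc', div_lt_iff₀ (by positivity)]
      nlinarith [abs_nonneg C]

section Lattice

variable {n : ℕ}

abbrev intLattice (n : ℕ) : AddSubgroup (EuclideanSpace ℝ (Fin n)) :=
  (Submodule.span ℤ (Set.range (EuclideanSpace.basisFun (Fin n) ℝ).toBasis)).toAddSubgroup

abbrev unitCube (n : ℕ) : Set (EuclideanSpace ℝ (Fin n)) :=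
  ZSpan.fundamentalDomain (EuclideanSpace.basisFun (Fin n) ℝ).toBasis

theorem unitCube_eq_preimage_pi :
    unitCube n = WithLp.ofLp ⁻¹' Set.pi Set.univ fun _ => Set.Ico (0 : ℝ) 1 := by
  ext; simp

theorem volume_unitCube : volume (unitCube n) = 1 := by
  rw [measure_congr (ZSpan.fundamentalDomain_ae_parallelepiped _ volume)]
  exact (EuclideanSpace.basisFun (Fin n) ℝ).volume_parallelepiped

theorem norm_le_of_mem_unitCube {x : EuclideanSpace ℝ (Fin n)} (hx : x ∈ unitCube n) :
    ‖x‖ ≤ n := by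
  rw [← ZSpan.fract_eq_self.mpr hx]
  simpa using ZSpan.norm_fract_le (EuclideanSpace.basisFun (Fin n) ℝ).toBasis x

theorem intCast_floor_apply_intLattice (γ : intLattice n) (i : Fin n) :
    (⌊(γ : EuclideanSpace ℝ (Fin n)) i⌋ : ℝ) = (γ : EuclideanSpace ℝ (Fin n)) i := by
  obtain ⟨k, hk⟩ := (Module.Basis.mem_span_iff_repr_mem ℤ _ _).mp γ.2 i
  simp only [OrthonormalBasis.coe_toBasis_repr_apply, EuclideanSpace.basisFun_repr,
    algebraMap_int_eq, eq_intCast] at hk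
  rw [← hk, Int.floor_intCast]

noncomputable def latticeCoord (γ : intLattice n) : Fin n → ℤ :=
  fun i => ⌊(γ : EuclideanSpace ℝ (Fin n)) i⌋

theorem latticeCoord_injective : Function.Injective (latticeCoord (n := n)) := by
  intro γ γ' h
  ext i
  rw [← intCast_floor_apply_intLattice γ, ← intCast_floor_apply_intLattice γ']
  exact congrArg (fun m : Fin n → ℤ => (m i : ℝ)) h

instance : Countable (intLattice n) := latticeCoord_injective.countable

theorem vaddInvariantMeasure_intLattice {μ : Measure (EuclideanSpace ℝ (Fin n))}
    (hper : ∀ i : Fin n, ∀ B : Set (EuclideanSpace ℝ (Fin n)), MeasurableSet B →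
      μ ((fun x => x + EuclideanSpace.single i (1 : ℝ)) '' B) = μ B) :
    VAddInvariantMeasure (intLattice n) (EuclideanSpace ℝ (Fin n)) μ := by
  refine ⟨fun γ B hB => ?_⟩
  have hγ : (γ : EuclideanSpace ℝ (Fin n)) ∈
      AddSubgroup.closure (Set.range (EuclideanSpace.basisFun (Fin n) ℝ).toBasis) := by
    rw [← Submodule.span_int_eq_addSubgroupClosure]; exact γ.2
  have hmap : μ.map ((γ : EuclideanSpace ℝ (Fin n)) + ·) = μ := by
    refine Measure.map_add_left_eq_self_of_mem_closure ?_ hγ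
    rintro _ ⟨i, rfl⟩
    simpa using Measure.map_add_left_eq_self_of_image_add_right (hper i)
  change μ (((γ : EuclideanSpace ℝ (Fin n)) + ·) ⁻¹' B) = μ B
  rw [← Measure.map_apply (measurable_const_add _) hB, hmap]

noncomputable def latticeBox (n M : ℕ) : Finset (intLattice n) :=
  (Fintype.piFinset fun _ => Icc (-(M : ℤ)) M).preimage latticeCoord latticeCoord_injective.injOn

theorem card_latticeBox_le (M : ℕ) : #(latticeBox n M) ≤ (2 * M + 1) ^ n := by
  calc #(latticeBox n M) ≤ #(Fintype.piFinset fun _ : Fin n => Icc (-(M : ℤ)) M) :=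
        card_le_card_of_injOn latticeCoord (fun γ hγ => mem_preimage.mp hγ)
          latticeCoord_injective.injOn
    _ = (2 * M + 1) ^ n := by
        simp only [Fintype.card_piFinset, Int.card_Icc, prod_const, card_univ, Fintype.card_fin]
        congr 1; omega

theorem lt_norm_of_notMem_latticeBox {M : ℕ} {γ : intLattice n} (hγ : γ ∉ latticeBox n M) :
    (M : ℝ) < ‖(γ : EuclideanSpace ℝ (Fin n))‖ := by
  simp only [latticeBox, mem_preimage, Fintype.mem_piFinset, mem_Icc, not_forall, ← abs_le] at hγ
  obtain ⟨i, hi⟩ := hγ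
  calc (M : ℝ) < |(latticeCoord γ i : ℝ)| := by exact_mod_cast not_le.mp hi
    _ = ‖(γ : EuclideanSpace ℝ (Fin n)) i‖ := by
        rw [latticeCoord, intCast_floor_apply_intLattice, Real.norm_eq_abs]
    _ ≤ _ := PiLp.norm_apply_le _ i

/-- The box `latticeBox n ⌈R / ε + n⌉₊` contains every `γ` whose cell `ε • (γ + [0,1)ⁿ)` meets
the ball of radius `R`. -/
noncomputable def latticeRiemannSum (f : EuclideanSpace ℝ (Fin n) → ℝ) (R ε : ℝ) : ℝ :=
  ε ^ n * ∑ γ ∈ latticeBox n ⌈R / ε + n⌉₊, f (ε • (γ : EuclideanSpace ℝ (Fin n)))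

theorem pow_mul_card_latticeBox_le {R ε : ℝ} (hR : 0 ≤ R) (hε : 0 < ε) (hε₁ : ε ≤ 1) :
    ε ^ n * #(latticeBox n ⌈R / ε + n⌉₊) ≤ (2 * R + 2 * n + 3) ^ n := by
  set M := ⌈R / ε + n⌉₊
  have hM : (M : ℝ) < R / ε + n + 1 := Nat.ceil_lt_add_one (by positivity)
  have hεM : ε * (2 * M + 1) ≤ 2 * R + 2 * n + 3 := by
    have : ε * (R / ε) = R := by field_simp
    nlinarith
  calc ε ^ n * #(latticeBox n M) ≤ ε ^ n * (2 * M + 1) ^ n := by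
        gcongr; exact_mod_cast card_latticeBox_le M
    _ = (ε * (2 * M + 1)) ^ n := (mul_pow _ _ _).symm
    _ ≤ _ := by gcongr

end Lattice

section Rescaling

variable {n : ℕ}

theorem integral_rescaledMeasure (ν : Measure (EuclideanSpace ℝ (Fin n))) {ε : ℝ} (hε : 0 < ε)
    (f : EuclideanSpace ℝ (Fin n) → ℝ) :
    ∫ x, f x ∂rescaledMeasure n ν ε = ε ^ n * ∫ x, f (ε • x) ∂ν := by
  rw [rescaledMeasure, integral_smul_measure,
    (measurableEmbedding_const_smul₀ hε.ne').integral_map, ENNReal.toReal_pow,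
    ENNReal.toReal_ofReal hε.le, smul_eq_mul]

theorem rescaledMeasure_volume {ε : ℝ} (hε : 0 < ε) : rescaledMeasure n volume ε = volume := by
  rw [rescaledMeasure, Measure.map_addHaar_smul volume hε.ne', finrank_euclideanSpace_fin,
    smul_smul, abs_of_pos (by positivity), ← ENNReal.ofReal_pow hε.le,
    ← ENNReal.ofReal_mul (by positivity), mul_inv_cancel₀ (by positivity), ENNReal.ofReal_one,
    one_smul]

theorem abs_integral_rescaledMeasure_sub_latticeRiemannSum_le
    (ν : Measure (EuclideanSpace ℝ (Fin n))) [VAddInvariantMeasure (intLattice n) _ ν]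
    [IsFiniteMeasureOnCompacts ν] (hν : ν (unitCube n) = 1)
    {f : EuclideanSpace ℝ (Fin n) → ℝ} (hf : Continuous f) (hfs : HasCompactSupport f)
    {R ε δ : ℝ} (hR₀ : 0 ≤ R) (hR : ∀ x, R < ‖x‖ → f x = 0) (hε : 0 < ε) (hε₁ : ε ≤ 1)
    (hδ : ∀ y z, dist y z ≤ ε * n → |f y - f z| ≤ δ) :
    |∫ x, f x ∂rescaledMeasure n ν ε - latticeRiemannSum f R ε| ≤
      (2 * R + 2 * n + 3) ^ n * δ := by
  set T := latticeBox n ⌈R / ε + n⌉₊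
  have hδ₀ : 0 ≤ δ := by simpa using hδ 0 0 (by simp; positivity)
  have hint : Integrable (fun x => f (ε • x)) ν :=
    (hf.comp (continuous_const_smul ε)).integrable_of_hasCompactSupport (hfs.comp_smul hε.ne')
  have hT : ∀ γ ∉ T, ∀ x ∈ unitCube n, f (ε • (γ +ᵥ x)) = 0 := by
    intro γ hγ x hx
    refine hR _ ?_
    have hγ' := lt_norm_of_notMem_latticeBox hγ
    have hM : R / ε + n ≤ ⌈R / ε + n⌉₊ := Nat.le_ceil _
    have hx' := norm_le_of_mem_unitCube hx
    have htri := norm_sub_le_norm_add (γ : EuclideanSpace ℝ (Fin n)) x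
    rw [norm_smul, Real.norm_eq_abs, abs_of_pos hε, ← div_lt_iff₀' hε]
    exact (by linarith : R / ε < ‖(γ : EuclideanSpace ℝ (Fin n)) + x‖)
  have hosc : ∀ γ ∈ T, ∀ x ∈ unitCube n,
      |f (ε • (γ +ᵥ x)) - f (ε • (γ : EuclideanSpace ℝ (Fin n)))| ≤ δ := by
    intro γ _ x hx
    refine hδ _ _ ?_
    change dist (ε • ((γ : EuclideanSpace ℝ (Fin n)) + x)) _ ≤ _
    rw [smul_add, dist_self_add_left, norm_smul, Real.norm_eq_abs, abs_of_pos hε]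
    exact mul_le_mul_of_nonneg_left (norm_le_of_mem_unitCube hx) hε.le
  have hcells := (ZSpan.isAddFundamentalDomain' _ ν).abs_integral_sub_sum_le hν hint T _ hT hosc
  rw [integral_rescaledMeasure ν hε, latticeRiemannSum, ← mul_sub, abs_mul,
    abs_of_pos (by positivity)]
  calc ε ^ n * |_| ≤ ε ^ n * (#T * δ) := by gcongr
    _ = ε ^ n * #T * δ := by ring
    _ ≤ _ := by gcongr; exact pow_mul_card_latticeBox_le hR₀ hε hε₁

end Rescaling

theorem rescaled_periodic_measure_tendsto_lebesgue_general
    (n : ℕ) (μ : Measure (EuclideanSpace ℝ (Fin n)))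
    (hRadon : ∀ K : Set (EuclideanSpace ℝ (Fin n)), IsCompact K → μ K < ⊤)
    (hper : ∀ i : Fin n, ∀ B : Set (EuclideanSpace ℝ (Fin n)), MeasurableSet B →
      μ ((fun x => x + EuclideanSpace.single i (1 : ℝ)) '' B) = μ B)
    (hnorm : μ (WithLp.ofLp ⁻¹' Set.pi Set.univ fun _ : Fin n => Set.Ico (0 : ℝ) 1) = 1)
    (f : EuclideanSpace ℝ (Fin n) → ℝ) (hf : Continuous f) (hsupp : HasCompactSupport f) :
    Tendsto (fun ε : ℝ => ∫ x, f x ∂(rescaledMeasure n μ ε)) (𝓝[>] (0 : ℝ))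
      (𝓝 (∫ x, f x)) := by
  have : IsFiniteMeasureOnCompacts μ := ⟨fun {K} hK => hRadon K hK⟩
  have := vaddInvariantMeasure_intLattice hper
  have hμ : μ (unitCube n) = 1 := by rwa [unitCube_eq_preimage_pi]
  obtain ⟨R, hR₀, hR⟩ := hsupp.exists_nonneg_forall_lt_norm_eq_zero
  refine tendsto_of_forall_eventually_abs_sub_le (C := 2 * (2 * R + 2 * n + 3) ^ n) fun δ hδ => ?_
  obtain ⟨η, hη, hfη⟩ :=
    Metric.uniformContinuous_iff.mp (hsupp.uniformContinuous_of_continuous hf) δ hδ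
  filter_upwards [Ioo_mem_nhdsGT (show (0 : ℝ) < min 1 (η / (n + 1)) by positivity)]
    with ε ⟨hε, hεη⟩
  have hε₁ : ε ≤ 1 := hεη.le.trans (min_le_left _ _)
  have hosc : ∀ y z, dist y z ≤ ε * n → |f y - f z| ≤ δ := by
    have := hεη.trans_le (min_le_right _ _)
    rw [lt_div_iff₀ (by positivity)] at this
    exact fun y z hyz => (hfη (hyz.trans_lt (by nlinarith))).le
  have hμε := abs_integral_rescaledMeasure_sub_latticeRiemannSum_le μ hμ hf hsupp hR₀ hR hε hε₁ hosc
  have hvol := abs_integral_rescaledMeasure_sub_latticeRiemannSum_le volume volume_unitCube hf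
    hsupp hR₀ hR hε hε₁ hosc
  rw [rescaledMeasure_volume hε] at hvol
  calc _ ≤ _ := abs_sub_le _ (latticeRiemannSum f R ε) _
    _ ≤ _ := by rw [abs_sub_comm (latticeRiemannSum f R ε)]; linarith

/-- If `μ` is a 1-periodic positive Radon measure on `ℝⁿ` normalized by
`μ([0,1)ⁿ) = 1`, then the measures `μ_ε(B) = εⁿ μ(ε⁻¹ B)` converge locally weakly* to the
Lebesgue measure as `ε → 0⁺`: for every continuous compactly supported `f`,
`∫ f dμ_ε → ∫ f dx`. -/
theorem rescaled_periodic_measure_tendsto_lebesgue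
    (n : ℕ) (hn : 1 ≤ n) (μ : Measure (EuclideanSpace ℝ (Fin n)))
    (hRadon : ∀ K : Set (EuclideanSpace ℝ (Fin n)), IsCompact K → μ K < ⊤)
    (hper : ∀ i : Fin n, ∀ B : Set (EuclideanSpace ℝ (Fin n)), MeasurableSet B →
      μ ((fun x => x + EuclideanSpace.single i (1 : ℝ)) '' B) = μ B)
    (hnorm : μ (WithLp.ofLp ⁻¹' Set.pi Set.univ fun _ : Fin n => Set.Ico (0 : ℝ) 1) = 1)
    (f : EuclideanSpace ℝ (Fin n) → ℝ) (hf : Continuous f) (hsupp : HasCompactSupport f) :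
    Tendsto (fun ε : ℝ => ∫ x, f x ∂(rescaledMeasure n μ ε)) (𝓝[>] (0 : ℝ))
      (𝓝 (∫ x, f x)) :=
  rescaled_periodic_measure_tendsto_lebesgue_general n μ hRadon hper hnorm f hf hsupp
end

section
/- Let u₁,u₂ ∈ L²(Ω;ℝ³) and let (u_ε)_{ε>0} be a bounded family in L²(Ω;ℝ³) such that ∫_{εE¹}|u_ε−u₁|²dx → 0 and ∫_{εE²}|u_ε−u₂|²dx → 0 as ε→0. Then u_ε converges weakly in L²(Ω;ℝ³) to (1−c)u₁ + c u₂, where c = π/16; that is, for every φ ∈ L²(Ω;ℝ³), ∫_Ω u_ε·φ dx → ∫_Ω ((1−c)u₁ + c u₂)·φ dx. -/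
open MeasureTheory Real Filter Topology

noncomputable section

/-- The cross product on `ℝ³`. -/
def cross3 (a b : EuclideanSpace ℝ (Fin 3)) : EuclideanSpace ℝ (Fin 3) :=
  WithLp.toLp 2 ![a 1 * b 2 - a 2 * b 1, a 2 * b 0 - a 0 * b 2, a 0 * b 1 - a 1 * b 0]

/-- The symmetric product `v ⊙ ν = ½(vνᵀ + νvᵀ)` of two vectors in `ℝ³`. -/
def symProd (v w : EuclideanSpace ℝ (Fin 3)) : Matrix (Fin 3) (Fin 3) ℝ :=
  fun i j => (v i * w j + w i * v j) / 2

/-- The squared Frobenius norm of a `3×3` matrix. -/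
def frobSq (M : Matrix (Fin 3) (Fin 3) ℝ) : ℝ := ∑ i, ∑ j, (M i j) ^ 2

/-- The projection `ℝ³ → ℝ²` on the first two coordinates. -/
def proj2 (x : EuclideanSpace ℝ (Fin 3)) : EuclideanSpace ℝ (Fin 2) := WithLp.toLp 2 ![x 0, x 1]

/-- The cylindrical domain `Ω = ω × (0,1) ⊂ ℝ³`. -/
def cylDomain (ω : Set (EuclideanSpace ℝ (Fin 2))) : Set (EuclideanSpace ℝ (Fin 3)) :=
  {x | proj2 x ∈ ω ∧ x 2 ∈ Set.Ioo (0 : ℝ) 1}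

/-- The center `x_i = (εi₁ + ε/2, εi₂ + ε/2)` of the `i`-th disk. -/
def ctr (ε : ℝ) (i : ℤ × ℤ) : EuclideanSpace ℝ (Fin 2) :=
  WithLp.toLp 2 ![ε * i.1 + ε / 2, ε * i.2 + ε / 2]

/-- The open cylinder `εE_i² = εD_i × (0,1)`, with `εD_i` the open disk of center `x_i`
and radius `ε/4`. -/
def cylE (ε : ℝ) (i : ℤ × ℤ) : Set (EuclideanSpace ℝ (Fin 3)) :=
  {x | proj2 x ∈ Metric.ball (ctr ε i) (ε / 4) ∧ x 2 ∈ Set.Ioo (0 : ℝ) 1}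

/-- The lateral boundary `∂(εD_i) × (0,1)` of the `i`-th cylinder. -/
def latE (ε : ℝ) (i : ℤ × ℤ) : Set (EuclideanSpace ℝ (Fin 3)) :=
  {x | proj2 x ∈ Metric.sphere (ctr ε i) (ε / 4) ∧ x 2 ∈ Set.Ioo (0 : ℝ) 1}

/-- The index set `I_ε = {i ∈ ℤ² : εE_i² ⊂ Ω}`. -/
def idx (ω : Set (EuclideanSpace ℝ (Fin 2))) (ε : ℝ) : Set (ℤ × ℤ) :=
  {i | cylE ε i ⊆ cylDomain ω}

/-- `εE² = ⋃_{i ∈ I_ε} εE_i²`. -/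
def Etwo (ω : Set (EuclideanSpace ℝ (Fin 2))) (ε : ℝ) : Set (EuclideanSpace ℝ (Fin 3)) :=
  ⋃ i ∈ idx ω ε, cylE ε i

/-- `εE¹ = Ω ∖ εE²`. -/
def Eone (ω : Set (EuclideanSpace ℝ (Fin 2))) (ε : ℝ) : Set (EuclideanSpace ℝ (Fin 3)) :=
  cylDomain ω \ Etwo ω ε

/-- The horizontal outward unit normal on the lateral boundary of the `i`-th cylinder. -/
def νlat (ε : ℝ) (i : ℤ × ℤ) (x : EuclideanSpace ℝ (Fin 3)) : EuclideanSpace ℝ (Fin 3) :=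
  WithLp.toLp 2 ![(x 0 - ctr ε i 0) / ‖proj2 x - ctr ε i‖, (x 1 - ctr ε i 1) / ‖proj2 x - ctr ε i‖, 0]

/-- The lateral surface energy `∫_{∂(εD_i)×(0,1)} |(α×x+β) ⊙ ν(x)|² d𝓗²` of the rigid
displacement `x ↦ α×x+β` on the `i`-th cylinder. -/
def latEnergy (ε : ℝ) (i : ℤ × ℤ) (α β : EuclideanSpace ℝ (Fin 3)) : ℝ :=
  ∫ x in latE ε i, frobSq (symProd (cross3 α x + β) (νlat ε i x)) ∂(μH[2])

end

/-!
Cut `ℝ³` into cubes of side `ε`. Every cube meets the periodic family of vertical cylinders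
`⋃ᵢ εDᵢ × ℝ` in a set of volume `(π/16) ε³`, so against a continuous compactly supported test
function the indicator of that family differs from `π/16` only by the oscillation of the test
function over a cube; by density of such functions in `L¹`, the indicator converges weakly to
`π/16`. Inside `Ω` the family differs from `εE²` only by cylinders within `ε/2` of `∂ω × (0,1)`,
and these drop out by dominated convergence. Finally, on `Ω`
`⟪u_ε, φ⟫ = ⟪u_ε - u₁, φ⟫` on `εE¹` and `⟪u_ε - u₂, φ⟫ + ⟪u₁, φ⟫ + ⟪u₂ - u₁, φ⟫` on `εE²`:
by Cauchy–Schwarz the first two pieces vanish in the limit, and the weak limit of the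
indicator of `εE²` turns the last one into `(π/16) ∫_Ω ⟪u₂ - u₁, φ⟫`.
-/

open scoped RealInnerProductSpace

local notation "ℝ²" => EuclideanSpace ℝ (Fin 2)
local notation "ℝ³" => EuclideanSpace ℝ (Fin 3)

def prism (A : Set ℝ²) (B : Set ℝ) : Set ℝ³ := {x | proj2 x ∈ A ∧ x 2 ∈ B}

lemma continuous_proj2 : Continuous proj2 :=
  (PiLp.continuous_toLp 2 _).comp <| continuous_pi fun j => by
    fin_cases j <;> exact (EuclideanSpace.proj _).continuous

lemma isOpen_prism {A : Set ℝ²} {B : Set ℝ} (hA : IsOpen A) (hB : IsOpen B) :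
    IsOpen (prism A B) :=
  (hA.preimage continuous_proj2).inter (hB.preimage (EuclideanSpace.proj 2).continuous)

lemma measurableSet_prism {A : Set ℝ²} {B : Set ℝ} (hA : MeasurableSet A)
    (hB : MeasurableSet B) : MeasurableSet (prism A B) :=
  (continuous_proj2.measurable hA).inter ((EuclideanSpace.proj 2).continuous.measurable hB)

lemma volume_prism (A : Set ℝ²) (B : Set ℝ) :
    volume (prism A B) = volume A * volume B := by
  let e : ℝ³ ≃ᵐ ℝ × (Fin 2 → ℝ) :=
    (MeasurableEquiv.toLp 2 (Fin 3 → ℝ)).symm.trans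
      (MeasurableEquiv.piFinSuccAbove (fun _ => ℝ) 2)
  have he : MeasurePreserving e volume (volume.prod volume) :=
    (measurePreserving_piFinSuccAbove (fun _ : Fin 3 => (volume : Measure ℝ)) 2).comp
      (EuclideanSpace.volume_preserving_symm_measurableEquiv_toLp (Fin 3))
  have hpre : prism A B = e ⁻¹' (B ×ˢ (MeasurableEquiv.toLp 2 (Fin 2 → ℝ) ⁻¹' A)) := by
    ext x
    have hx : proj2 x = MeasurableEquiv.toLp 2 (Fin 2 → ℝ) (e x).2 := by
      ext j; fin_cases j <;> rfl
    change proj2 x ∈ A ∧ x 2 ∈ B ↔ (e x).1 ∈ B ∧ _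
    rw [hx, and_comm]
    rfl
  rw [hpre, he.measure_preimage_equiv, Measure.prod_prod, mul_comm,
    (PiLp.volume_preserving_toLp (Fin 2)).measure_preimage_equiv]

lemma abs_indicator_one_sub_le {X : Type*} (s : Set X) (c : ℝ) (x : X) :
    |s.indicator 1 x - c| ≤ 1 + |c| := by
  refine (abs_sub _ _).trans (add_le_add_left ?_ _)
  by_cases hx : x ∈ s <;> simp [hx]

section CellDensity

variable {X ι : Type*} [MetricSpace X] [MeasurableSpace X] [MeasurableSpace ι]

/-- The cells of the partition are the fibres of `q`, and `p j` is a marked point within `δ` of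
every point of the cell `j`. -/
structure HasCellDensity (μ : Measure X) (s : Set X) (q : X → ι) (p : ι → X) (δ c : ℝ) :
    Prop where
  measurableSet : MeasurableSet s
  measurable : Measurable q
  dist_le : ∀ x, dist x (p (q x)) ≤ δ
  measure_cell_ne_top : ∀ j, μ (q ⁻¹' {j}) ≠ ⊤
  measureReal_inter_cell : ∀ j, μ.real (s ∩ q ⁻¹' {j}) = c * μ.real (q ⁻¹' {j})

variable {μ : Measure X} {s : Set X} {q : X → ι} {p : ι → X} {δ c : ℝ}

lemma HasCellDensity.norm_indicator_sub_mul_sub_comp_le (h : HasCellDensity μ s q p δ c)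
    {g : X → ℝ} {η : ℝ} (hη : ∀ x y, dist x y ≤ δ → |g x - g y| ≤ η) (x : X) :
    ‖(s.indicator 1 x - c) * (g x - g (p (q x)))‖
      ≤ (Metric.cthickening δ (tsupport g)).indicator (fun _ => (1 + |c|) * η) x := by
  by_cases hx : x ∈ Metric.cthickening δ (tsupport g)
  · rw [Set.indicator_of_mem hx, Real.norm_eq_abs, abs_mul]
    exact mul_le_mul (abs_indicator_one_sub_le s c x) (hη x _ (h.dist_le x))
      (abs_nonneg _) (by positivity)
  · have hgx : g x = 0 := image_eq_zero_of_notMem_tsupport fun hx' =>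
      hx (Metric.self_subset_cthickening _ hx')
    have hgpx : g (p (q x)) = 0 := image_eq_zero_of_notMem_tsupport fun hx' =>
      hx (Metric.mem_cthickening_of_dist_le x _ δ _ hx' (h.dist_le x))
    rw [Set.indicator_of_notMem hx, hgx, hgpx, sub_self, mul_zero, norm_zero]

variable [Countable ι] [MeasurableSingletonClass ι]

lemma HasCellDensity.integral_indicator_sub_mul_comp_eq_zero (h : HasCellDensity μ s q p δ c)
    (g : X → ℝ) (hint : Integrable (fun x => (s.indicator 1 x - c) * g (p (q x))) μ) :
    ∫ x, (s.indicator 1 x - c) * g (p (q x)) ∂μ = 0 := by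
  have hcells : ⋃ j, q ⁻¹' {j} = Set.univ := by ext x; simp
  have hcell : ∀ j, MeasurableSet (q ⁻¹' {j}) := fun j => h.measurable (measurableSet_singleton j)
  rw [← setIntegral_univ, ← hcells, integral_iUnion hcell (pairwise_disjoint_fiber q)
    (by rw [hcells]; exact hint.integrableOn)]
  refine (tsum_congr fun j => ?_).trans tsum_zero
  have hfin : ∀ a : ℝ, IntegrableOn (fun _ => a) (q ⁻¹' {j}) μ :=
    fun a => integrableOn_const (h.measure_cell_ne_top j)
  calc ∫ x in q ⁻¹' {j}, (s.indicator 1 x - c) * g (p (q x)) ∂μ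
      = ∫ x in q ⁻¹' {j}, (s.indicator 1 x - c) * g (p j) ∂μ :=
        setIntegral_congr_fun (hcell j) fun x hx => by rw [show q x = j from hx]
    _ = (μ.real (s ∩ q ⁻¹' {j}) - c * μ.real (q ⁻¹' {j})) * g (p j) := by
        rw [integral_mul_const,
          integral_sub (f := s.indicator 1) ((hfin 1).indicator h.measurableSet) (hfin c),
          integral_indicator_one h.measurableSet, setIntegral_const]
        simp [Measure.restrict_apply h.measurableSet, measureReal_def, mul_comm]
    _ = 0 := by rw [h.measureReal_inter_cell, sub_self, zero_mul]

lemma HasCellDensity.setIntegral_sub_mul_integral_eq (h : HasCellDensity μ s q p δ c)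
    {g : X → ℝ} (hg : Integrable g μ)
    (hdiff : Integrable (fun x => (s.indicator 1 x - c) * (g x - g (p (q x)))) μ) :
    ∫ x in s, g x ∂μ - c * ∫ x, g x ∂μ
      = ∫ x, (s.indicator 1 x - c) * (g x - g (p (q x))) ∂μ := by
  have hχg : Integrable (fun x => (s.indicator 1 x - c) * g x) μ :=
    hg.bdd_mul ((measurable_one.indicator h.measurableSet).sub_const c).aestronglyMeasurable
      (ae_of_all _ fun x => abs_indicator_one_sub_le s c x)
  have hχstep : Integrable (fun x => (s.indicator 1 x - c) * g (p (q x))) μ :=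
    (hχg.sub hdiff).congr (ae_of_all _ fun x => by simp only [Pi.sub_apply]; ring)
  simp_rw [mul_sub]
  rw [integral_sub hχg hχstep, h.integral_indicator_sub_mul_comp_eq_zero g hχstep, sub_zero,
    ← integral_indicator h.measurableSet, ← integral_const_mul,
    ← integral_sub (hg.indicator h.measurableSet) (hg.const_mul c)]
  congr 1 with x
  by_cases hx : x ∈ s <;> simp [hx, sub_mul]

variable [BorelSpace X] [ProperSpace X]

lemma HasCellDensity.abs_setIntegral_sub_le [IsFiniteMeasureOnCompacts μ]
    (h : HasCellDensity μ s q p δ c) {g : X → ℝ} (hg : Continuous g) (hgs : HasCompactSupport g)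
    {η : ℝ} (hη : ∀ x y, dist x y ≤ δ → |g x - g y| ≤ η) :
    |∫ x in s, g x ∂μ - c * ∫ x, g x ∂μ|
      ≤ (1 + |c|) * η * μ.real (Metric.cthickening δ (tsupport g)) := by
  set K := Metric.cthickening δ (tsupport g)
  have hK : IsCompact K := hgs.isCompact.cthickening
  have hKint : Integrable (K.indicator fun _ => (1 + |c|) * η) μ :=
    (integrable_indicator_iff hK.measurableSet).2 (integrableOn_const hK.measure_lt_top.ne)
  have hstep : Measurable fun x => g (p (q x)) :=
    (measurable_of_countable (g ∘ p)).comp h.measurable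
  have hdiff : Integrable (fun x => (s.indicator 1 x - c) * (g x - g (p (q x)))) μ :=
    hKint.mono' ((((measurable_one.indicator h.measurableSet).sub_const c).mul
        (hg.measurable.sub hstep)).aestronglyMeasurable)
      (ae_of_all _ (h.norm_indicator_sub_mul_sub_comp_le hη))
  calc |∫ x in s, g x ∂μ - c * ∫ x, g x ∂μ|
      = ‖∫ x, (s.indicator 1 x - c) * (g x - g (p (q x))) ∂μ‖ := by
        rw [h.setIntegral_sub_mul_integral_eq (hg.integrable_of_hasCompactSupport hgs) hdiff,
          Real.norm_eq_abs]
    _ ≤ ∫ x, K.indicator (fun _ => (1 + |c|) * η) x ∂μ :=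
        norm_integral_le_of_norm_le hKint (ae_of_all _ (h.norm_indicator_sub_mul_sub_comp_le hη))
    _ = (1 + |c|) * η * μ.real K := by
        rw [integral_indicator_const _ hK.measurableSet, smul_eq_mul, mul_comm]

variable {α : Type*} {l : Filter α} {S : α → Set X} {Q : α → X → ι} {P : α → ι → X}
  {Δ : α → ℝ}

lemma tendsto_setIntegral_of_hasCellDensity_of_continuous [IsFiniteMeasureOnCompacts μ]
    (hS : ∀ᶠ a in l, HasCellDensity μ (S a) (Q a) (P a) (Δ a) c) (hΔ : Tendsto Δ l (𝓝 0))
    {g : X → ℝ} (hg : Continuous g) (hgs : HasCompactSupport g) :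
    Tendsto (fun a => ∫ x in S a, g x ∂μ) l (𝓝 (c * ∫ x, g x ∂μ)) := by
  set K := Metric.cthickening 1 (tsupport g)
  have hK : μ K ≠ ⊤ := hgs.isCompact.cthickening.measure_lt_top.ne
  set C := (1 + |c|) * μ.real K
  rw [Metric.tendsto_nhds]
  intro η hη
  have hη' : 0 < η / (C + 1) := by positivity
  obtain ⟨r, hr, hgr⟩ := Metric.uniformContinuous_iff.1
    (hgs.uniformContinuous_of_continuous hg) _ hη'
  filter_upwards [hS, hΔ.eventually (gt_mem_nhds (lt_min hr one_pos))] with a ha haΔ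
  have hmod : ∀ x y, dist x y ≤ Δ a → |g x - g y| ≤ η / (C + 1) := fun x y hxy =>
    (hgr (hxy.trans_lt (haΔ.trans_le (min_le_left _ _)))).le
  have hKa : μ.real (Metric.cthickening (Δ a) (tsupport g)) ≤ μ.real K :=
    measureReal_mono (Metric.cthickening_mono (haΔ.le.trans (min_le_right _ _)) _) hK
  calc dist (∫ x in S a, g x ∂μ) (c * ∫ x, g x ∂μ)
      ≤ (1 + |c|) * (η / (C + 1)) * μ.real (Metric.cthickening (Δ a) (tsupport g)) :=
        ha.abs_setIntegral_sub_le hg hgs hmod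
    _ ≤ η / (C + 1) * C := by
        rw [mul_comm (1 + |c|), mul_assoc]
        gcongr
        exact mul_le_mul_of_nonneg_left hKa (by positivity)
    _ < η := by
        rw [div_mul_eq_mul_div, div_lt_iff₀ (by positivity)]
        nlinarith

theorem tendsto_setIntegral_of_hasCellDensity [μ.Regular]
    (hS : ∀ᶠ a in l, HasCellDensity μ (S a) (Q a) (P a) (Δ a) c) (hΔ : Tendsto Δ l (𝓝 0))
    {f : X → ℝ} (hf : Integrable f μ) :
    Tendsto (fun a => ∫ x in S a, f x ∂μ) l (𝓝 (c * ∫ x, f x ∂μ)) := by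
  rw [Metric.tendsto_nhds]
  intro η hη
  obtain ⟨g, hgs, hfg, hg, hgint⟩ :=
    hf.exists_hasCompactSupport_integral_sub_le (show 0 < η / (2 * (1 + |c|)) by positivity)
  filter_upwards [Metric.tendsto_nhds.1
    (tendsto_setIntegral_of_hasCellDensity_of_continuous hS hΔ hg hgs) _ (half_pos hη)]
    with a ha
  have hfgS : dist (∫ x in S a, f x ∂μ) (∫ x in S a, g x ∂μ) ≤ ∫ x, ‖f x - g x‖ ∂μ := by
    rw [dist_eq_norm, ← integral_sub hf.integrableOn hgint.integrableOn]
    exact (norm_integral_le_integral_norm _).trans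
      (setIntegral_le_integral (hf.sub hgint).norm (ae_of_all _ fun _ => norm_nonneg _))
  have hfg' : dist (c * ∫ x, g x ∂μ) (c * ∫ x, f x ∂μ) ≤ |c| * ∫ x, ‖f x - g x‖ ∂μ := by
    rw [dist_eq_norm, ← mul_sub, norm_mul, Real.norm_eq_abs, ← integral_sub hgint hf]
    gcongr
    exact (norm_integral_le_integral_norm _).trans_eq
      (integral_congr_ae (ae_of_all _ fun _ => norm_sub_rev _ _))
  calc dist (∫ x in S a, f x ∂μ) (c * ∫ x, f x ∂μ)
      ≤ dist (∫ x in S a, f x ∂μ) (∫ x in S a, g x ∂μ)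
        + dist (∫ x in S a, g x ∂μ) (c * ∫ x, g x ∂μ)
        + dist (c * ∫ x, g x ∂μ) (c * ∫ x, f x ∂μ) := dist_triangle4 _ _ _ _
    _ < (1 + |c|) * (η / (2 * (1 + |c|))) + η / 2 := by nlinarith [abs_nonneg c]
    _ = η := by field_simp; ring

end CellDensity

section Grid

noncomputable def gridIndex (ε : ℝ) (x : ℝ³) : Fin 3 → ℤ := fun k => ⌊x k / ε⌋

noncomputable def gridCenter (ε : ℝ) (j : Fin 3 → ℤ) : ℝ³ := WithLp.toLp 2 fun k => ε * j k + ε / 2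

noncomputable def periodicCyl (ε : ℝ) : Set ℝ³ :=
  prism (⋃ i : ℤ × ℤ, Metric.ball (ctr ε i) (ε / 4)) Set.univ

variable {ε : ℝ}

lemma floor_div_eq_iff (hε : 0 < ε) {t : ℝ} {k : ℤ} :
    ⌊t / ε⌋ = k ↔ t ∈ Set.Ico (ε * k) (ε * k + ε) := by
  rw [Int.floor_eq_iff, le_div_iff₀ hε, div_lt_iff₀ hε, Set.mem_Ico]
  constructor <;> rintro ⟨h₁, h₂⟩ <;> constructor <;> linarith

lemma gridIndex_preimage (hε : 0 < ε) (j : Fin 3 → ℤ) :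
    gridIndex ε ⁻¹' {j} = (MeasurableEquiv.toLp 2 (Fin 3 → ℝ)).symm ⁻¹'
      Set.univ.pi fun k => Set.Ico (ε * j k) (ε * j k + ε) := by
  ext x
  simp [gridIndex, funext_iff, floor_div_eq_iff hε]

lemma volume_gridIndex_preimage (hε : 0 < ε) (j : Fin 3 → ℤ) :
    volume (gridIndex ε ⁻¹' {j}) = ENNReal.ofReal ε ^ 3 := by
  rw [gridIndex_preimage hε,
    (EuclideanSpace.volume_preserving_symm_measurableEquiv_toLp (Fin 3)).measure_preimage_equiv,
    volume_pi_pi]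
  simp

lemma floor_div_eq_of_mem_ball (hε : 0 < ε) {i : ℤ × ℤ} {y : ℝ²}
    (hy : y ∈ Metric.ball (ctr ε i) (ε / 4)) : ⌊y 0 / ε⌋ = i.1 ∧ ⌊y 1 / ε⌋ = i.2 := by
  have h₀ := abs_lt.1 ((PiLp.dist_apply_le y (ctr ε i) 0).trans_lt hy)
  have h₁ := abs_lt.1 ((PiLp.dist_apply_le y (ctr ε i) 1).trans_lt hy)
  simp only [ctr, Matrix.cons_val_zero, Matrix.cons_val_one] at h₀ h₁
  simp only [floor_div_eq_iff hε, Set.mem_Ico]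
  constructor <;> constructor <;> linarith

lemma periodicCyl_inter_gridIndex_preimage (hε : 0 < ε) (j : Fin 3 → ℤ) :
    periodicCyl ε ∩ gridIndex ε ⁻¹' {j}
      = prism (Metric.ball (ctr ε (j 0, j 1)) (ε / 4)) (Set.Ico (ε * j 2) (ε * j 2 + ε)) := by
  ext x
  simp only [periodicCyl, prism, Set.mem_inter_iff, Set.mem_iUnion, Set.mem_univ,
    and_true, Set.mem_preimage, Set.mem_singleton_iff]
  constructor
  · rintro ⟨⟨i, hi⟩, rfl⟩
    obtain ⟨h₀, h₁⟩ := floor_div_eq_of_mem_ball hε hi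
    have hi' : (gridIndex ε x 0, gridIndex ε x 1) = i := Prod.ext h₀ h₁
    exact ⟨hi' ▸ hi, (floor_div_eq_iff hε).1 rfl⟩
  · rintro ⟨hx, hx₂⟩
    obtain ⟨h₀, h₁⟩ := floor_div_eq_of_mem_ball hε hx
    refine ⟨⟨_, hx⟩, funext fun k => ?_⟩
    fin_cases k
    exacts [h₀, h₁, (floor_div_eq_iff hε).2 hx₂]

lemma dist_gridCenter_gridIndex_le (hε : 0 < ε) (x : ℝ³) :
    dist x (gridCenter ε (gridIndex ε x)) ≤ ε := by
  have hk : ∀ k, dist (x k) (gridCenter ε (gridIndex ε x) k) ^ 2 ≤ (ε / 2) ^ 2 := by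
    intro k
    obtain ⟨h₁, h₂⟩ := (floor_div_eq_iff hε).1 (rfl : ⌊x k / ε⌋ = _)
    refine pow_le_pow_left₀ dist_nonneg ?_ 2
    rw [Real.dist_eq, abs_le]
    simp only [gridCenter, gridIndex]
    constructor <;> linarith
  rw [EuclideanSpace.dist_eq, Real.sqrt_le_left hε.le]
  calc ∑ k, dist (x k) (gridCenter ε (gridIndex ε x) k) ^ 2 ≤ ∑ _k : Fin 3, (ε / 2) ^ 2 :=
        Finset.sum_le_sum fun k _ => hk k
    _ = 3 * (ε / 2) ^ 2 := by simp
    _ ≤ ε ^ 2 := by nlinarith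

lemma measurableSet_periodicCyl (ε : ℝ) : MeasurableSet (periodicCyl ε) :=
  measurableSet_prism (MeasurableSet.iUnion fun _ => measurableSet_ball) MeasurableSet.univ

lemma hasCellDensity_periodicCyl (hε : 0 < ε) :
    HasCellDensity volume (periodicCyl ε) (gridIndex ε) (gridCenter ε) ε (π / 16) where
  measurableSet := measurableSet_periodicCyl ε
  measurable := measurable_pi_lambda _ fun k =>
    ((EuclideanSpace.proj k).continuous.measurable.div_const ε).floor
  dist_le := dist_gridCenter_gridIndex_le hε
  measure_cell_ne_top j := by simp [volume_gridIndex_preimage hε]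
  measureReal_inter_cell j := by
    rw [measureReal_def, measureReal_def, periodicCyl_inter_gridIndex_preimage hε, volume_prism,
      EuclideanSpace.volume_ball_fin_two, Real.volume_Ico, volume_gridIndex_preimage hε]
    simp only [ENNReal.toReal_mul, ENNReal.toReal_pow, ENNReal.toReal_ofReal hε.le,
      ENNReal.toReal_ofReal pi_nonneg, ENNReal.toReal_ofReal (by positivity : 0 ≤ ε / 4),
      add_sub_cancel_left]
    ring

theorem tendsto_setIntegral_periodicCyl {f : ℝ³ → ℝ} (hf : Integrable f) :
    Tendsto (fun ε => ∫ x in periodicCyl ε, f x) (𝓝[>] 0) (𝓝 (π / 16 * ∫ x, f x)) :=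
  tendsto_setIntegral_of_hasCellDensity
    (eventually_nhdsWithin_of_forall fun _ hε => hasCellDensity_periodicCyl hε)
    (tendsto_nhdsWithin_of_tendsto_nhds tendsto_id) hf

end Grid

section L2

variable {α E : Type*} [MeasurableSpace α] {μ : Measure α} [NormedAddCommGroup E]
  [InnerProductSpace ℝ E]

lemma MeasureTheory.MemLp.integrable_inner {v w : α → E} (hv : MemLp v 2 μ) (hw : MemLp w 2 μ) :
    Integrable (fun x => ⟪v x, w x⟫) μ :=
  (L2.integrable_inner (hv.toLp v) (hw.toLp w)).congr <| by
    filter_upwards [hv.coeFn_toLp, hw.coeFn_toLp] with x hvx hwx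
    rw [hvx, hwx]

lemma abs_integral_inner_le {v w : α → E} (hv : MemLp v 2 μ) (hw : MemLp w 2 μ) :
    |∫ x, ⟪v x, w x⟫ ∂μ| ≤ √(∫ x, ‖v x‖ ^ 2 ∂μ) * √(∫ x, ‖w x‖ ^ 2 ∂μ) := by
  have hinner : ∀ {f g : α → E} (hf : MemLp f 2 μ) (hg : MemLp g 2 μ),
      ⟪hf.toLp f, hg.toLp g⟫ = ∫ x, ⟪f x, g x⟫ ∂μ := by
    intro f g hf hg
    rw [L2.inner_def]
    refine integral_congr_ae ?_
    filter_upwards [hf.coeFn_toLp, hg.coeFn_toLp] with x hfx hgx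
    rw [hfx, hgx]
  have hnorm : ∀ {f : α → E} (hf : MemLp f 2 μ), √(∫ x, ‖f x‖ ^ 2 ∂μ) = ‖hf.toLp f‖ := by
    intro f hf
    simp_rw [← real_inner_self_eq_norm_sq]
    rw [← hinner hf hf, real_inner_self_eq_norm_sq, Real.sqrt_sq (norm_nonneg _)]
  rw [← hinner hv hw, hnorm hv, hnorm hw]
  exact abs_real_inner_le_norm _ _

lemma tendsto_integral_inner_of_tendsto_integral_norm_sq {ι : Type*} {l : Filter ι}
    {ν : ι → Measure α} {v : ι → α → E} {w : α → E} (hν : ∀ i, ν i ≤ μ)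
    (hv : ∀ᶠ i in l, MemLp (v i) 2 (ν i)) (hw : MemLp w 2 μ)
    (h : Tendsto (fun i => ∫ x, ‖v i x‖ ^ 2 ∂ν i) l (𝓝 0)) :
    Tendsto (fun i => ∫ x, ⟪v i x, w x⟫ ∂ν i) l (𝓝 0) := by
  have hw2 : Integrable (fun x => ‖w x‖ ^ 2) μ := (memLp_two_iff_integrable_sq_norm hw.1).1 hw
  have hbound : Tendsto (fun i => √(∫ x, ‖v i x‖ ^ 2 ∂ν i) * √(∫ x, ‖w x‖ ^ 2 ∂μ)) l (𝓝 0) := by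
    simpa using h.sqrt.mul_const _
  refine squeeze_zero_norm' ?_ hbound
  filter_upwards [hv] with i hvi
  refine (abs_integral_inner_le hvi (hw.mono_measure (hν i))).trans ?_
  exact mul_le_mul_of_nonneg_left (Real.sqrt_le_sqrt
    (integral_mono_measure (hν i) (ae_of_all _ fun _ => by positivity) hw2)) (Real.sqrt_nonneg _)

lemma setIntegral_inner_eq_of_subset {s t : Set α} (ht : MeasurableSet t) (hts : t ⊆ s)
    {v v₁ v₂ φ : α → E} (hv : MemLp v 2 (μ.restrict s)) (hv₁ : MemLp v₁ 2 (μ.restrict s))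
    (hv₂ : MemLp v₂ 2 (μ.restrict s)) (hφ : MemLp φ 2 (μ.restrict s)) :
    ∫ x in s, ⟪v x, φ x⟫ ∂μ
      = ∫ x in s \ t, ⟪v x - v₁ x, φ x⟫ ∂μ + ∫ x in t, ⟪v x - v₂ x, φ x⟫ ∂μ
        + (∫ x in s, ⟪v₁ x, φ x⟫ ∂μ + ∫ x in t, ⟪v₂ x - v₁ x, φ x⟫ ∂μ) := by
  have hsplit : ∀ {f : α → E}, MemLp f 2 (μ.restrict s) →
      ∫ x in s, ⟪f x, φ x⟫ ∂μ = ∫ x in s \ t, ⟪f x, φ x⟫ ∂μ + ∫ x in t, ⟪f x, φ x⟫ ∂μ :=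
    fun hf => by rw [setIntegral_sdiff ht (hf.integrable_inner hφ) hts, sub_add_cancel]
  have hsub : ∀ {r : Set α} {f g : α → E}, r ⊆ s → MemLp f 2 (μ.restrict s) →
      MemLp g 2 (μ.restrict s) →
      ∫ x in r, ⟪f x - g x, φ x⟫ ∂μ = ∫ x in r, ⟪f x, φ x⟫ ∂μ - ∫ x in r, ⟪g x, φ x⟫ ∂μ := by
    intro r f g hrs hf hg
    have hle := Measure.restrict_mono hrs le_rfl (μ := μ)
    simp_rw [inner_sub_left]
    exact integral_sub ((hf.integrable_inner hφ).mono_measure hle)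
      ((hg.integrable_inner hφ).mono_measure hle)
  rw [hsplit hv, hsplit hv₁, hsub Set.sdiff_subset hv hv₁, hsub hts hv hv₂, hsub hts hv₂ hv₁]
  ring

end L2

section BoundaryLayer

lemma tendsto_setIntegral_of_ae_eventually_notMem {X ι E : Type*} [MeasurableSpace X]
    {μ : Measure X} [NormedAddCommGroup E] [NormedSpace ℝ E] {l : Filter ι}
    [l.IsCountablyGenerated] {s : ι → Set X} (hs : ∀ i, MeasurableSet (s i)) {f : X → E}
    (hf : Integrable f μ) (h : ∀ᵐ x ∂μ, ∀ᶠ i in l, x ∉ s i) :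
    Tendsto (fun i => ∫ x in s i, f x ∂μ) l (𝓝 0) := by
  simp_rw [← integral_indicator (hs _)]
  rw [← integral_zero X E]
  refine tendsto_integral_filter_of_dominated_convergence (fun x => ‖f x‖)
    (.of_forall fun i => (hf.indicator (hs i)).aestronglyMeasurable)
    (.of_forall fun i => ae_of_all _ fun x => norm_indicator_le_norm_self _ _) hf.norm ?_
  filter_upwards [h] with x hx
  exact tendsto_const_nhds.congr' (hx.mono fun i hi => (Set.indicator_of_notMem hi f).symm)

variable {ω : Set ℝ²}

lemma measurableSet_Etwo (ω : Set ℝ²) (ε : ℝ) : MeasurableSet (Etwo ω ε) :=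
  (isOpen_biUnion fun i _ => isOpen_prism (A := Metric.ball (ctr ε i) (ε / 4))
    Metric.isOpen_ball isOpen_Ioo).measurableSet

lemma Etwo_subset_cylDomain (ω : Set ℝ²) (ε : ℝ) : Etwo ω ε ⊆ cylDomain ω :=
  Set.iUnion₂_subset fun _ hi => hi

lemma Etwo_subset_periodicCyl (ω : Set ℝ²) (ε : ℝ) : Etwo ω ε ⊆ periodicCyl ε :=
  Set.iUnion₂_subset fun i _ _ hx => ⟨Set.mem_iUnion.2 ⟨i, hx.1⟩, Set.mem_univ _⟩

lemma eventually_mem_Etwo_of_mem_periodicCyl (hω : IsOpen ω) {x : ℝ³}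
    (hx : x ∈ cylDomain ω) : ∀ᶠ ε in 𝓝[>] 0, x ∈ periodicCyl ε → x ∈ Etwo ω ε := by
  obtain ⟨r, hr, hball⟩ := Metric.isOpen_iff.1 hω _ hx.1
  filter_upwards [Ioo_mem_nhdsGT hr] with ε hε hxP
  obtain ⟨i, hi⟩ := Set.mem_iUnion.1 hxP.1
  refine Set.mem_iUnion₂.2 ⟨i, fun y hy => ⟨hball ?_, hy.2⟩, hi, hx.2⟩
  calc dist (proj2 y) (proj2 x) ≤ dist (proj2 y) (ctr ε i) + dist (proj2 x) (ctr ε i) :=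
        dist_triangle_right _ _ _
    _ < ε / 4 + ε / 4 := add_lt_add hy.1 hi
    _ < r := by linarith [hε.1, hε.2]

theorem tendsto_setIntegral_Etwo (hω : IsOpen ω) {h : ℝ³ → ℝ}
    (hh : IntegrableOn h (cylDomain ω)) :
    Tendsto (fun ε => ∫ x in Etwo ω ε, h x) (𝓝[>] 0) (𝓝 (π / 16 * ∫ x in cylDomain ω, h x)) := by
  have hΩ : MeasurableSet (cylDomain ω) := (isOpen_prism hω isOpen_Ioo).measurableSet
  have hcyl : Tendsto (fun ε => ∫ x in periodicCyl ε, h x ∂volume.restrict (cylDomain ω))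
      (𝓝[>] 0) (𝓝 (π / 16 * ∫ x in cylDomain ω, h x)) := by
    have := tendsto_setIntegral_periodicCyl ((integrable_indicator_iff hΩ).2 hh)
    rw [integral_indicator hΩ] at this
    refine this.congr fun ε => ?_
    rw [setIntegral_indicator hΩ, Measure.restrict_restrict (measurableSet_periodicCyl ε)]
  have hlayer : Tendsto
      (fun ε => ∫ x in periodicCyl ε \ Etwo ω ε, h x ∂volume.restrict (cylDomain ω))
      (𝓝[>] 0) (𝓝 0) :=
    tendsto_setIntegral_of_ae_eventually_notMem
      (fun ε => (measurableSet_periodicCyl ε).diff (measurableSet_Etwo ω ε)) hh <|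
      (ae_restrict_iff' hΩ).2 <| ae_of_all _ fun x hx =>
        (eventually_mem_Etwo_of_mem_periodicCyl hω hx).mono fun _ hε hx' => hx'.2 (hε hx'.1)
  refine (sub_zero (π / 16 * ∫ x in cylDomain ω, h x) ▸ hcyl.sub hlayer).congr fun ε => ?_
  rw [setIntegral_sdiff (measurableSet_Etwo ω ε) (Integrable.integrableOn hh)
      (Etwo_subset_periodicCyl ω ε),
    sub_sub_cancel, Measure.restrict_restrict (measurableSet_Etwo ω ε),
    Set.inter_eq_left.2 (Etwo_subset_cylDomain ω ε)]

end BoundaryLayer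

theorem two_scale_limit_weak_L2_general
    (ω : Set (EuclideanSpace ℝ (Fin 2))) (hω : IsOpen ω)
    (u₁ u₂ : EuclideanSpace ℝ (Fin 3) → EuclideanSpace ℝ (Fin 3))
    (hu₁ : MemLp u₁ 2 (volume.restrict (cylDomain ω)))
    (hu₂ : MemLp u₂ 2 (volume.restrict (cylDomain ω)))
    (u : ℝ → EuclideanSpace ℝ (Fin 3) → EuclideanSpace ℝ (Fin 3))
    (huL2 : ∀ ε : ℝ, 0 < ε → MemLp (u ε) 2 (volume.restrict (cylDomain ω)))
    (hconv1 : Tendsto (fun ε : ℝ => ∫ x in Eone ω ε, ‖u ε x - u₁ x‖ ^ 2) (𝓝[>] (0 : ℝ))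
      (𝓝 (0 : ℝ)))
    (hconv2 : Tendsto (fun ε : ℝ => ∫ x in Etwo ω ε, ‖u ε x - u₂ x‖ ^ 2) (𝓝[>] (0 : ℝ))
      (𝓝 (0 : ℝ))) :
    ∀ φ : EuclideanSpace ℝ (Fin 3) → EuclideanSpace ℝ (Fin 3),
      MemLp φ 2 (volume.restrict (cylDomain ω)) →
      Tendsto (fun ε : ℝ => ∫ x in cylDomain ω, ⟪u ε x, φ x⟫) (𝓝[>] (0 : ℝ))
        (𝓝 (∫ x in cylDomain ω,
          ⟪(1 - π / 16) • u₁ x + (π / 16) • u₂ x, φ x⟫)) := by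
  intro φ hφ
  have hE₁ := tendsto_integral_inner_of_tendsto_integral_norm_sq (v := fun ε x => u ε x - u₁ x)
    (fun ε => Measure.restrict_mono Set.sdiff_subset le_rfl)
    (eventually_nhdsWithin_of_forall fun ε hε => (huL2 ε hε).sub hu₁ |>.mono_measure
      (Measure.restrict_mono Set.sdiff_subset le_rfl)) hφ hconv1
  have hE₂ := tendsto_integral_inner_of_tendsto_integral_norm_sq (v := fun ε x => u ε x - u₂ x)
    (fun ε => Measure.restrict_mono (Etwo_subset_cylDomain ω ε) le_rfl)
    (eventually_nhdsWithin_of_forall fun ε hε => (huL2 ε hε).sub hu₂ |>.mono_measure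
      (Measure.restrict_mono (Etwo_subset_cylDomain ω ε) le_rfl)) hφ hconv2
  have h₂₁ : Integrable (fun x => ⟪u₂ x - u₁ x, φ x⟫) (volume.restrict (cylDomain ω)) :=
    (hu₂.sub hu₁).integrable_inner hφ
  have hcells := tendsto_setIntegral_Etwo hω h₂₁
  have hlimit : ∫ x in cylDomain ω, ⟪(1 - π / 16) • u₁ x + (π / 16) • u₂ x, φ x⟫
      = (∫ x in cylDomain ω, ⟪u₁ x, φ x⟫) + π / 16 * ∫ x in cylDomain ω, ⟪u₂ x - u₁ x, φ x⟫ := by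
    rw [← integral_const_mul, ← integral_add (hu₁.integrable_inner hφ) (h₂₁.const_mul _)]
    congr 1 with x
    simp only [inner_add_left, inner_sub_left, real_inner_smul_left]
    ring
  have hsum := ((hE₁.add hE₂).add (tendsto_const_nhds.add hcells)).congr' <| by
    filter_upwards [self_mem_nhdsWithin] with ε hε
    exact (setIntegral_inner_eq_of_subset (measurableSet_Etwo ω ε) (Etwo_subset_cylDomain ω ε)
      (huL2 ε hε) hu₁ hu₂ hφ).symm
  rwa [zero_add, zero_add, ← hlimit] at hsum

/-- If a bounded family `(u_ε) ⊂ L²(Ω;ℝ³)` satisfies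
`∫_{εE¹}|u_ε−u₁|² → 0` and `∫_{εE²}|u_ε−u₂|² → 0`, then `u_ε ⇀ (1−c)u₁ + cu₂` weakly in
`L²(Ω;ℝ³)`, where `c = π/16`. -/
theorem two_scale_limit_weak_L2
    (ω : Set (EuclideanSpace ℝ (Fin 2))) (hω : IsOpen ω) (hωconn : IsConnected ω)
    (hωb : Bornology.IsBounded ω)
    (u₁ u₂ : EuclideanSpace ℝ (Fin 3) → EuclideanSpace ℝ (Fin 3))
    (hu₁ : MemLp u₁ 2 (volume.restrict (cylDomain ω)))
    (hu₂ : MemLp u₂ 2 (volume.restrict (cylDomain ω)))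
    (u : ℝ → EuclideanSpace ℝ (Fin 3) → EuclideanSpace ℝ (Fin 3))
    (huL2 : ∀ ε : ℝ, 0 < ε → MemLp (u ε) 2 (volume.restrict (cylDomain ω)))
    (hbdd : ∃ M : ℝ, ∀ ε : ℝ, 0 < ε → ∫ x in cylDomain ω, ‖u ε x‖ ^ 2 ≤ M)
    (hconv1 : Tendsto (fun ε : ℝ => ∫ x in Eone ω ε, ‖u ε x - u₁ x‖ ^ 2) (𝓝[>] (0 : ℝ))
      (𝓝 (0 : ℝ)))
    (hconv2 : Tendsto (fun ε : ℝ => ∫ x in Etwo ω ε, ‖u ε x - u₂ x‖ ^ 2) (𝓝[>] (0 : ℝ))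
      (𝓝 (0 : ℝ))) :
    ∀ φ : EuclideanSpace ℝ (Fin 3) → EuclideanSpace ℝ (Fin 3),
      MemLp φ 2 (volume.restrict (cylDomain ω)) →
      Tendsto (fun ε : ℝ => ∫ x in cylDomain ω, ⟪u ε x, φ x⟫) (𝓝[>] (0 : ℝ))
        (𝓝 (∫ x in cylDomain ω,
          ⟪(1 - π / 16) • u₁ x + (π / 16) • u₂ x, φ x⟫)) :=
  two_scale_limit_weak_L2_general ω hω u₁ u₂ hu₁ hu₂ u huL2 hconv1 hconv2
end
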